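/- Let π be an avoider of length n−1 ≥ 1, let 1 ≤ i ≤ lmax(π), and let π̂ be the permutation of [n] obtained from π by inserting the new largest letter n immediately before the i-th left-to-right maximum of π (counted from the left). Then π̂ is an avoider and lmax(π̂) = i. -/

import Mathlib

/-
Common definitions: permutations of {1,…,n} as words (lists), dashed
pattern avoidance, permutation statistics, and β(1,0)-trees with their
statistics, following the paper
"Decompositions and statistics for β(1,0)-trees and nonseparable permutations".
-/

namespace Beta10

attribute [local instance] Classical.propDecidable

/-- `l` is a permutation of `{1, …, n}` (written as a word). -/
def IsPermOf (n : ℕ) (l : List ℕ) : Prop := l.Perm (List.range' 1 n)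

/-- an occurrence of the dashed pattern 3-1-4-2 at positions `i < j < k < m` -/
def occ3142 (l : List ℕ) (i j k m : ℕ) : Prop :=
  i < j ∧ j < k ∧ k < m ∧ m < l.length ∧
  l.getD j 0 < l.getD m 0 ∧ l.getD m 0 < l.getD i 0 ∧ l.getD i 0 < l.getD k 0

def pat3142 (l : List ℕ) : Prop := ∃ i j k m, occ3142 l i j k m

/-- an occurrence of the dashed pattern 2-41-3 at positions `i < j, j+1 < k` -/
def occ2413 (l : List ℕ) (i j k : ℕ) : Prop :=
  i < j ∧ j + 1 < k ∧ k < l.length ∧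
  l.getD (j+1) 0 < l.getD i 0 ∧ l.getD i 0 < l.getD k 0 ∧ l.getD k 0 < l.getD j 0

def pat2413 (l : List ℕ) : Prop := ∃ i j k, occ2413 l i j k

/-- an *avoider*: a permutation of `{1,…,n}` avoiding 3-1-4-2 and 2-41-3 -/
def Avoider (n : ℕ) (l : List ℕ) : Prop := IsPermOf n l ∧ ¬ pat3142 l ∧ ¬ pat2413 l

/-- direct sum of permutations -/
def dsum (σ τ : List ℕ) : List ℕ := σ ++ τ.map (· + σ.length)

/-- a nonempty permutation that is not a direct sum of two nonempty permutations -/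
def Indecomposable (l : List ℕ) : Prop :=
  l ≠ [] ∧ ¬ ∃ σ τ : List ℕ, σ ≠ [] ∧ τ ≠ [] ∧ l = dsum σ τ

/-- position `p` holds a left-to-right maximum of `l` -/
def IsLRMax (l : List ℕ) (p : ℕ) : Prop :=
  p < l.length ∧ ∀ j < p, l.getD j 0 < l.getD p 0

/-- position `p` holds a left-to-right minimum of `l` -/
def IsLRMin (l : List ℕ) (p : ℕ) : Prop :=
  p < l.length ∧ ∀ j < p, l.getD p 0 < l.getD j 0

/-- position `p` holds a right-to-left maximum of `l` -/
def IsRLMax (l : List ℕ) (p : ℕ) : Prop :=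
  p < l.length ∧ ∀ j < l.length, p < j → l.getD j 0 < l.getD p 0

/-- the number of left-to-right maxima -/
noncomputable def lmax (l : List ℕ) : ℕ :=
  ((Finset.range l.length).filter (fun p => IsLRMax l p)).card

/-- the number of left-to-right minima -/
noncomputable def lmin (l : List ℕ) : ℕ :=
  ((Finset.range l.length).filter (fun p => IsLRMin l p)).card

/-- the number of right-to-left maxima -/
noncomputable def rmax (l : List ℕ) : ℕ :=
  ((Finset.range l.length).filter (fun p => IsRLMax l p)).card

/-- the number of ascents -/
noncomputable def asc (l : List ℕ) : ℕ :=
  ((Finset.range (l.length - 1)).filter (fun p => l.getD p 0 < l.getD (p+1) 0)).card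

/-- the number of descents -/
noncomputable def des (l : List ℕ) : ℕ :=
  ((Finset.range (l.length - 1)).filter (fun p => l.getD (p+1) 0 < l.getD p 0)).card

/-- `ldr l` : the largest `i` with `a₁ > a₂ > ⋯ > aᵢ` (and `0` for the empty word) -/
noncomputable def ldr (l : List ℕ) : ℕ :=
  ((Finset.range (l.length + 1)).filter
    (fun i => ∀ j, j + 1 < i → l.getD (j+1) 0 < l.getD j 0)).sup id

/-- `lir l` : the largest `i` with `a₁ < a₂ < ⋯ < aᵢ` (and `0` for the empty word) -/
noncomputable def lir (l : List ℕ) : ℕ :=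
  ((Finset.range (l.length + 1)).filter
    (fun i => ∀ j, j + 1 < i → l.getD j 0 < l.getD (j+1) 0)).sup id

/-- the factor of `l` occupying positions `p, …, q-1` is a component of `l`:
it is nonempty, all letters before it are smaller, all letters after it are
larger, and it admits no nontrivial splitting `αβ` with `α ≺ β`. -/
def IsComponent (l : List ℕ) (p q : ℕ) : Prop :=
  p < q ∧ q ≤ l.length ∧
  (∀ i < p, ∀ j, p ≤ j → j < q → l.getD i 0 < l.getD j 0) ∧
  (∀ j, p ≤ j → j < q → ∀ i, q ≤ i → i < l.length → l.getD j 0 < l.getD i 0) ∧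
  ¬ ∃ r, p < r ∧ r < q ∧ ∀ i, p ≤ i → i < r → ∀ j, r ≤ j → j < q → l.getD i 0 < l.getD j 0

/-- the number of components of `l` -/
noncomputable def comp (l : List ℕ) : ℕ :=
  (((Finset.range (l.length + 1)) ×ˢ (Finset.range (l.length + 1))).filter
    (fun pq => IsComponent l pq.1 pq.2)).card

/-- insert the letter `a` into `l` so that it occupies (0-based) position `r` -/
def insertAt (l : List ℕ) (r : ℕ) (a : ℕ) : List ℕ := l.take r ++ a :: l.drop r

/-- the (0-based) positions of the left-to-right maxima, from left to right -/
noncomputable def lrMaxPos (l : List ℕ) : List ℕ :=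
  (List.range l.length).filter (fun p => decide (IsLRMax l p))

/-- the finite set of avoiders of `{1,…,n}` -/
noncomputable def avoidersFinset (n : ℕ) : Finset (List ℕ) :=
  ((List.range' 1 n).permutations.toFinset).filter (fun l => ¬ pat3142 l ∧ ¬ pat2413 l)

/-- reverse of a permutation -/
def revP (l : List ℕ) : List ℕ := l.reverse

/-- complement of a permutation of `{1,…,n}` -/
def complP (n : ℕ) (l : List ℕ) : List ℕ := l.map (fun a => n + 1 - a)

/-- inverse of a permutation of `{1,…,n}` (as a word: the `v`-th letter is the
position of the letter `v` in `l`, 1-based) -/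
def invP (l : List ℕ) : List ℕ :=
  (List.range' 1 l.length).map (fun v => l.idxOf v + 1)

/-- rooted plane trees with nodes labeled by natural numbers -/
inductive PTree : Type where
  | node : ℕ → List PTree → PTree

namespace PTree

/-- the label of the root -/
def label : PTree → ℕ | node l _ => l

/-- the list of subtrees of the root -/
def children : PTree → List PTree | node _ cs => cs

/-- the number of nodes -/
def size : PTree → ℕ
  | node _ cs => 1 + (cs.attach.map (fun x => size x.1)).sum
decreasing_by have := List.sizeOf_lt_of_mem x.2; simp at this ⊢; omega

/-- the number of leaves -/
def leaves : PTree → ℕ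
  | node _ [] => 1
  | node _ (c :: cs) => ((c :: cs).attach.map (fun x => leaves x.1)).sum
decreasing_by have := List.sizeOf_lt_of_mem x.2; simp at this ⊢; omega

/-- the number of internal (non-leaf) nodes; the root counts as internal -/
def internalN : PTree → ℕ
  | node _ [] => 0
  | node _ (c :: cs) => 1 + ((c :: cs).attach.map (fun x => internalN x.1)).sum
decreasing_by have := List.sizeOf_lt_of_mem x.2; simp at this ⊢; omega

/-- the number of children of the root -/
def subT (t : PTree) : ℕ := t.children.length

/-- the number of edges on the path from the root to the leftmost leaf -/
def lpath : PTree → ℕ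
  | node _ [] => 0
  | node _ (c :: _) => lpath c + 1

mutual
/-- the number of edges on the path from the root to the rightmost leaf -/
def rpath : PTree → ℕ
  | .node _ [] => 0
  | .node _ (c :: cs) => rpathAux c cs + 1
termination_by t => sizeOf t
def rpathAux : PTree → List PTree → ℕ
  | c, [] => rpath c
  | _, c' :: cs => rpathAux c' cs
termination_by c cs => sizeOf c + sizeOf cs
end

/-- the number of nodes with label 1, other than the root, on the path from
the root to the leftmost leaf -/
def lsub : PTree → ℕ
  | node _ [] => 0
  | node _ (c :: _) => lsub c + (if c.label = 1 then 1 else 0)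

mutual
/-- the number of nodes with label 1, other than the root, on the path from
the root to the rightmost leaf -/
def rsub : PTree → ℕ
  | .node _ [] => 0
  | .node _ (c :: cs) => rsubAux c cs
termination_by t => sizeOf t
def rsubAux : PTree → List PTree → ℕ
  | c, [] => rsub c + (if c.label = 1 then 1 else 0)
  | _, c' :: cs => rsubAux c' cs
termination_by c cs => sizeOf c + sizeOf cs
end

/-- the number of internal nodes common to the left path and the right path -/
def stem : PTree → ℕ
  | node _ [] => 0
  | node _ [c] => stem c + 1
  | node _ (_ :: _ :: _) => 1

/-- `tsum u v = u ⊕ v`: the subtrees of the root are those of `u` followed by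
those of `v`, and the root label is the sum of the root labels -/
def tsum (u v : PTree) : PTree := node (u.label + v.label) (u.children ++ v.children)

/-- `lam i t = λ(i, t)`: join a new root via an edge to the old root; both the
new root and the old root get the label `i` -/
def lam (i : ℕ) (t : PTree) : PTree := node i [node i t.children]

/-- the one-edge tree (two nodes, both labeled 1) -/
def edgeT : PTree := node 1 [node 1 []]

/-- `iterEdge k = ⊕^k edgeT`, the `k`-fold sum of one-edge trees -/
def iterEdge : ℕ → PTree
  | 0 => node 0 []
  | k + 1 => tsum edgeT (iterEdge k)

/-- does the path from the root to the leftmost leaf contain a node,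
other than the leaf itself, with label 1? -/
def leftPathOne : PTree → Bool
  | node _ [] => false
  | node l (c :: _) => (l == 1) || leftPathOne c

/-- delete the leftmost leaf and decrease by 1 the labels of all nodes on the
path from the root to it -/
def delLeft : PTree → PTree
  | node l [] => node l []
  | node l (node _ [] :: cs) => node (l - 1) cs
  | node l (c :: cs) => node (l - 1) (delLeft c :: cs)

/-- iterate: if the path from the root to the leftmost leaf contains a node
(other than that leaf) with label 1, stop and report 1 plus the number of
leaves already deleted; otherwise delete the leftmost leaf (decreasing the
labels on its path) and continue -/
def stemGo : ℕ → PTree → ℕ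
  | 0, _ => 0
  | fuel + 1, t => if leftPathOne t then 1 else 1 + stemGo fuel (delLeft t)

/-- the statistic stem′ of the paper: the index of the first leaf (from the
left) whose path to the root contains a node, other than the leaf itself,
with label 1, in the iterated leaf-deletion process -/
def stemP (t : PTree) : ℕ := stemGo t.size t

/-- the mirror image: recursively reverse the order of subtrees -/
def mirror : PTree → PTree
  | node l cs => node l ((cs.attach.map (fun x => mirror x.1)).reverse)
decreasing_by have := List.sizeOf_lt_of_mem x.2; simp at this ⊢; omega

/-- the statistic stem~ : stem′ of the mirror image -/
def stemM (t : PTree) : ℕ := stemP (mirror t)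

/-- `obs u v = u ⊘ v`: identify the rightmost leaf of `u` with the root of `v`;
the identified node gets label 1 -/
def obs : PTree → PTree → PTree
  | node _ [], v => node 1 v.children
  | node l [c], v => node l [obs c v]
  | node l (c :: c' :: cs), v => node l (c :: (obs (node l (c' :: cs)) v).children)
termination_by u _ => sizeOf u
decreasing_by all_goals (simp; try omega)

/-- validity of a non-root node of a β(1,0)-tree (together with all of its
descendants): a leaf has label 1, and any other node has a positive label
that is at most the sum of its children's labels -/
inductive IsBetaSub : PTree → Prop where
  | mk (l : ℕ) (cs : List PTree)
      (hleaf : cs = [] → l = 1)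
      (hinternal : cs ≠ [] → 1 ≤ l ∧ l ≤ (cs.map label).sum)
      (hchildren : ∀ c ∈ cs, IsBetaSub c) : IsBetaSub (node l cs)

end PTree

/-- `t` is a β(1,0)-tree: the root label equals the sum of the children's
labels, and every non-root node is valid -/
def IsBeta (t : PTree) : Prop :=
  t.label = (t.children.map PTree.label).sum ∧ ∀ c ∈ t.children, PTree.IsBetaSub c

end Beta10

/-!
The new letter `n` exceeds every other letter, so in an occurrence of 3-1-4-2 or 2-41-3 in `π̂` it
can only play the role of the `4`. Since `n` sits immediately before a left-to-right maximum `a_r`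
of `π`, such an occurrence is impossible or comes from one in `π`: in 3-1-4-2, replacing `n` by
`a_r` gives an occurrence in `π`, as `a_r` exceeds the letter playing `3` to its left; in 2-41-3
the letter playing `1` would be `a_r` itself, which exceeds the `2` to its left. The left-to-right
maxima of `π̂` are those of `π` to the left of `a_r`, followed by `n`.
-/

namespace Beta10

attribute [local instance] Classical.propDecidable

lemma range_eq_range_append_cons {r m : ℕ} (h : r < m) :
    List.range m = List.range r ++ r :: List.range' (r + 1) (m - r - 1) := by
  obtain ⟨k, rfl⟩ := Nat.exists_eq_add_of_lt h
  rw [show r + k + 1 - r - 1 = k by omega, List.range_eq_range', List.range_eq_range',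
    ← List.range'_succ]
  simpa [Nat.add_assoc] using (List.range'_append (s := 0) (m := r) (n := k + 1) (step := 1)).symm

lemma length_filter_range_getD {P : ℕ → Bool} {m k : ℕ}
    (hk : k < ((List.range m).filter P).length) :
    ((List.range (((List.range m).filter P).getD k 0)).filter P).length = k := by
  have hidx := (List.nodup_range.filter P).idxOf_getElem k hk
  rw [← List.getD_eq_getElem _ 0 hk] at hidx
  have hxL := List.getD_eq_getElem _ 0 hk ▸ List.getElem_mem hk
  generalize ((List.range m).filter P).getD k 0 = x at hidx hxL ⊢
  obtain ⟨hxm, hPx⟩ : x < m ∧ P x = true := by simpa using hxL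
  rw [range_eq_range_append_cons hxm, List.filter_append, List.filter_cons_of_pos hPx,
    List.idxOf_append_of_notMem (by simp), List.idxOf_cons_self] at hidx
  omega

section InsertAt

variable {l : List ℕ} {r x p : ℕ}

lemma perm_insertAt (l : List ℕ) (r x : ℕ) : (insertAt l r x).Perm (x :: l) := by
  simpa [insertAt] using (List.perm_middle (a := x) (l₁ := l.take r) (l₂ := l.drop r))

lemma length_insertAt (hr : r ≤ l.length) : (insertAt l r x).length = l.length + 1 := by
  simp [insertAt]; omega

lemma getD_insertAt_of_lt (hr : r ≤ l.length) (hp : p < r) :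
    (insertAt l r x).getD p 0 = l.getD p 0 := by
  rw [insertAt, List.getD_append _ _ _ _ (by simp [hr, hp])]
  simp [List.getD_eq_getElem?_getD, hp]

lemma getD_insertAt_self (hr : r ≤ l.length) : (insertAt l r x).getD r 0 = x := by
  rw [insertAt, List.getD_append_right _ _ _ _ (by simp [hr])]
  simp [hr]

lemma getD_insertAt_of_gt (hr : r ≤ l.length) (hp : r < p) :
    (insertAt l r x).getD p 0 = l.getD (p - 1) 0 := by
  obtain ⟨k, rfl⟩ := Nat.exists_eq_add_of_lt hp
  rw [insertAt, List.getD_append_right _ _ _ _ (by simp [hr]; omega)]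
  simp [List.length_take, min_eq_left hr, show r + k + 1 - r = k + 1 by omega,
    List.getD_eq_getElem?_getD, List.getElem?_drop]

/-- The position in `l` of the letter at position `p ≠ r` of `insertAt l r x`. -/
def predAbove (r p : ℕ) : ℕ := if r < p then p - 1 else p

lemma getD_insertAt_of_ne (hr : r ≤ l.length) (hp : p ≠ r) :
    (insertAt l r x).getD p 0 = l.getD (predAbove r p) 0 := by
  unfold predAbove
  split_ifs with h
  · exact getD_insertAt_of_gt hr h
  · exact getD_insertAt_of_lt hr (by omega)

lemma predAbove_lt_predAbove {q : ℕ} (h : p < q) (hp : p ≠ r) (hq : q ≠ r) :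
    predAbove r p < predAbove r q := by
  unfold predAbove; split_ifs <;> omega

lemma predAbove_succ (hp : p ≠ r) (hp' : p + 1 ≠ r) : predAbove r (p + 1) = predAbove r p + 1 := by
  unfold predAbove; split_ifs <;> omega

lemma predAbove_lt {m : ℕ} (hr : r ≤ m) (hp : p < m + 1) (hpr : p ≠ r) : predAbove r p < m := by
  unfold predAbove; split_ifs <;> omega

lemma getD_le_of_forall_le {l : List ℕ} (h : ∀ y ∈ l, y ≤ x) (q : ℕ) : l.getD q 0 ≤ x := by
  rcases lt_or_ge q l.length with hq | hq
  · rw [List.getD_eq_getElem l 0 hq]; exact h _ (List.getElem_mem hq)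
  · rw [List.getD_eq_default l 0 hq]; exact Nat.zero_le x

lemma getD_insertAt_le (hx : ∀ y ∈ l, y ≤ x) (q : ℕ) : (insertAt l r x).getD q 0 ≤ x := by
  refine getD_le_of_forall_le (fun y hy => ?_) q
  rcases List.mem_cons.1 ((perm_insertAt l r x).subset hy) with rfl | hy
  exacts [le_rfl, hx y hy]

lemma ne_of_getD_insertAt_lt (hr : r ≤ l.length) (hx : ∀ y ∈ l, y ≤ x) {q : ℕ}
    (h : (insertAt l r x).getD p 0 < (insertAt l r x).getD q 0) : p ≠ r := by
  intro hpr
  rw [hpr, getD_insertAt_self hr] at h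
  exact (getD_insertAt_le hx q).not_gt h

end InsertAt

section LargestLetter

variable {l : List ℕ} {r x : ℕ}

lemma IsPermOf.insertAt_succ {n : ℕ} (h : IsPermOf n l) (r : ℕ) :
    IsPermOf (n + 1) (insertAt l r (n + 1)) := by
  refine (perm_insertAt l r _).trans ((h.cons _).trans ?_)
  rw [List.range'_concat, one_mul, Nat.add_comm 1 n]
  exact (List.perm_append_singleton _ _).symm

lemma IsPermOf.lt_of_mem {n y : ℕ} (h : IsPermOf n l) (hy : y ∈ l) : y < n + 1 := by
  have := List.mem_range'_1.1 (h.mem_iff.1 hy)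
  omega

theorem not_pat3142_insertAt (hl : ¬ pat3142 l) (hr : IsLRMax l r) (hx : ∀ y ∈ l, y ≤ x) :
    ¬ pat3142 (insertAt l r x) := by
  rintro ⟨a, b, c, d, hab, hbc, hcd, hd, h1, h2, h3⟩
  have hrl := hr.1.le
  rw [length_insertAt hrl] at hd
  by_cases hc : c = r
  · subst hc
    rw [getD_insertAt_of_lt hrl (hab.trans hbc)] at h2 h3
    rw [getD_insertAt_of_lt hrl hbc, getD_insertAt_of_gt hrl hcd] at h1
    rw [getD_insertAt_of_gt hrl hcd] at h2
    have hac : l.getD a 0 < l.getD c 0 := hr.2 a (hab.trans hbc)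
    have hdc : d - 1 ≠ c := by
      rintro hdc
      rw [hdc] at h2
      exact hac.not_gt h2
    exact hl ⟨a, b, c, d - 1, hab, hbc, by omega, by omega, h1, h2, hac⟩
  · have ha := ne_of_getD_insertAt_lt hrl hx h3
    have hb := ne_of_getD_insertAt_lt hrl hx h1
    have hd' := ne_of_getD_insertAt_lt hrl hx h2
    simp only [getD_insertAt_of_ne hrl, ha, hb, hc, hd', ne_eq, not_false_eq_true] at h1 h2 h3
    exact hl ⟨_, _, _, _, predAbove_lt_predAbove hab ha hb, predAbove_lt_predAbove hbc hb hc,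
      predAbove_lt_predAbove hcd hc hd', predAbove_lt hrl hd hd', h1, h2, h3⟩

theorem not_pat2413_insertAt (hl : ¬ pat2413 l) (hr : IsLRMax l r) (hx : ∀ y ∈ l, y ≤ x) :
    ¬ pat2413 (insertAt l r x) := by
  rintro ⟨a, b, c, hab, hbc, hc, h1, h2, h3⟩
  have hrl := hr.1.le
  rw [length_insertAt hrl] at hc
  by_cases hb : b = r
  · subst hb
    rw [getD_insertAt_of_gt hrl (Nat.lt_add_one b), Nat.add_sub_cancel,
      getD_insertAt_of_lt hrl hab] at h1
    exact (hr.2 a hab).not_gt h1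
  · have ha := ne_of_getD_insertAt_lt hrl hx h2
    have hb1 := ne_of_getD_insertAt_lt hrl hx h1
    have hc' := ne_of_getD_insertAt_lt hrl hx h3
    simp only [getD_insertAt_of_ne hrl, ha, hb, hb1, hc', predAbove_succ hb hb1, ne_eq,
      not_false_eq_true] at h1 h2 h3
    have hbc' := predAbove_lt_predAbove hbc hb1 hc'
    rw [predAbove_succ hb hb1] at hbc'
    exact hl ⟨_, _, _, predAbove_lt_predAbove hab ha hb, hbc', predAbove_lt hrl hc hc', h1, h2, h3⟩

lemma isLRMax_insertAt_iff (hr : r ≤ l.length) (hx : ∀ y ∈ l, y < x) {p : ℕ} :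
    IsLRMax (insertAt l r x) p ↔ p = r ∨ p < r ∧ IsLRMax l p := by
  constructor
  · rintro ⟨hp, hmax⟩
    rcases lt_trichotomy p r with hpr | rfl | hpr
    · refine Or.inr ⟨hpr, by omega, fun j hj => ?_⟩
      have := hmax j hj
      rwa [getD_insertAt_of_lt hr hpr, getD_insertAt_of_lt hr (hj.trans hpr)] at this
    · exact Or.inl rfl
    · have := hmax r hpr
      rw [getD_insertAt_self hr] at this
      exact absurd this (getD_insertAt_le (fun y hy => (hx y hy).le) p).not_gt
  · rintro (rfl | ⟨hpr, -, hmax⟩)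
    · refine ⟨by rw [length_insertAt hr]; omega, fun j hj => ?_⟩
      rw [getD_insertAt_self hr, getD_insertAt_of_lt hr hj,
        List.getD_eq_getElem l 0 (by omega)]
      exact hx _ (List.getElem_mem _)
    · refine ⟨by rw [length_insertAt hr]; omega, fun j hj => ?_⟩
      rw [getD_insertAt_of_lt hr hpr, getD_insertAt_of_lt hr (hj.trans hpr)]
      exact hmax j hj

lemma lrMaxPos_insertAt (hr : r ≤ l.length) (hx : ∀ y ∈ l, y < x) :
    lrMaxPos (insertAt l r x) = (List.range r).filter (fun p => decide (IsLRMax l p)) ++ [r] := by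
  rw [lrMaxPos, length_insertAt hr, range_eq_range_append_cons (Nat.lt_succ_of_le hr),
    List.filter_append, List.filter_cons_of_pos (by simp [isLRMax_insertAt_iff hr hx])]
  congr 1
  · refine List.filter_congr fun p hp => ?_
    have := List.mem_range.1 hp
    simp [isLRMax_insertAt_iff hr hx, this, this.ne]
  · refine congrArg _ (List.filter_eq_nil_iff.2 fun p hp => ?_)
    have := List.mem_range'_1.1 hp
    simp only [isLRMax_insertAt_iff hr hx, decide_eq_true_eq]
    omega

end LargestLetter

lemma length_lrMaxPos (l : List ℕ) : (lrMaxPos l).length = lmax l := rfl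

lemma mem_lrMaxPos {l : List ℕ} {p : ℕ} : p ∈ lrMaxPos l ↔ IsLRMax l p := by
  simp only [lrMaxPos, List.mem_filter, List.mem_range, decide_eq_true_eq]
  exact ⟨fun h => h.2, fun h => ⟨h.1, h⟩⟩

/-- Let `l` be an avoider of length `n - 1 ≥ 1`, let
`1 ≤ i ≤ lmax l`, and let `l̂` be obtained from `l` by inserting the new
largest letter `n` immediately before the `i`-th left-to-right maximum of `l`.
Then `l̂` is an avoider and `lmax l̂ = i`. -/
theorem statement_2 (n : ℕ) (hn : 2 ≤ n) (l : List ℕ) (hav : Avoider (n - 1) l)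
    (i : ℕ) (hi1 : 1 ≤ i) (hi2 : i ≤ lmax l) :
    Avoider n (insertAt l ((lrMaxPos l).getD (i - 1) 0) n) ∧
    lmax (insertAt l ((lrMaxPos l).getD (i - 1) 0) n) = i := by
  obtain ⟨hperm, h3142, h2413⟩ := hav
  obtain ⟨m, rfl⟩ : ∃ m, n = m + 1 := ⟨n - 1, by omega⟩
  rw [Nat.add_sub_cancel] at hperm
  have hk : i - 1 < (lrMaxPos l).length := by rw [length_lrMaxPos]; omega
  have hr : IsLRMax l ((lrMaxPos l).getD (i - 1) 0) :=
    mem_lrMaxPos.1 (List.getD_eq_getElem _ 0 hk ▸ List.getElem_mem hk)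
  have hx : ∀ y ∈ l, y < m + 1 := fun y hy => hperm.lt_of_mem hy
  refine ⟨⟨hperm.insertAt_succ _, not_pat3142_insertAt h3142 hr fun y hy => (hx y hy).le,
    not_pat2413_insertAt h2413 hr fun y hy => (hx y hy).le⟩, ?_⟩
  rw [← length_lrMaxPos, lrMaxPos_insertAt hr.1.le hx, List.length_append, lrMaxPos,
    length_filter_range_getD hk]
  simp only [List.length_singleton]
  omega

end Beta10
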